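/- arXiv:1301.4195 — 2 statements merged into one kernel-verified Lean document; each statement's English description precedes it below -/
import Mathlib

section
/- Let d ≥ 1, let f : ℝ^d → ℂ be a Schwartz function, let ζ ∈ ℝ^d, and let G(·, ζ) : ℝ^d → ℂ be integrable. Define the Fourier transform f̂(ξ) = (2π)^{−d/2} ∫_{ℝ^d} f(v) e^{−i ξ·v} dv and Ĝ(ξ, ζ) = (2π)^{−d/2} ∫_{ℝ^d} G(u, ζ) e^{−i ξ·u} du. Then ∫_{ℝ^d} G(u, ζ) · [ (2π)^{−d/2} ∫_{ℝ^d} f(v) f(v − u) e^{−i ζ·v} dv ] du = ∫_{ℝ^d} Ĝ(ξ, ζ) f̂(ζ − ξ) f̂(ξ) dξ; that is, the weighted integral against the Fourier transform of v ↦ f(v) f(v − u) equals a weighted convolution of f̂ with itself against the weight Ĝ. -/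
/-!
With Mathlib's normalisation `𝓕 h ξ = ∫ e^{-2πi⟪v, ξ⟫} h v dv`, the transforms of the statement
are `ĥ ξ = (2π)^{-d/2} 𝓕 h ((2π)⁻¹ ξ)`. Fourier inversion for the translate `f (· - u)` turns the
transform of `v ↦ f v f (v - u)` at `ζ` into `∫ 𝓕 f (ζ - η) e^{-2πi⟪η, u⟫} 𝓕 f η dη`, which is the
Fourier transform at `u` of `k η = 𝓕 f (ζ - η) 𝓕 f η`. The multiplication formula
`∫ G · 𝓕 k = ∫ 𝓕 G · k` then gives the weighted convolution, and the substitution `ξ = 2π η`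
matches the constants: `(2π)^d ((2π)^{-d/2})^3 = (2π)^{-d/2}`.
-/

open MeasureTheory Real
open scoped RealInnerProductSpace FourierTransform

namespace Real

theorem rpow_neg_div_two_pow_three_mul_pow {a : ℝ} (ha : 0 < a) (n : ℕ) :
    (a ^ (-(n : ℝ) / 2)) ^ 3 * a ^ n = a ^ (-(n : ℝ) / 2) := by
  rw [← rpow_natCast a, ← rpow_natCast (a ^ _), ← rpow_mul ha.le, ← rpow_add ha]
  push_cast
  ring_nf

variable {V E : Type*} [NormedAddCommGroup V] [InnerProductSpace ℝ V] [FiniteDimensional ℝ V]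
  [MeasurableSpace V] [BorelSpace V] [NormedAddCommGroup E] [NormedSpace ℂ E]

theorem norm_fourier_le_integral_norm (f : V → E) (ξ : V) : ‖𝓕 f ξ‖ ≤ ∫ v, ‖f v‖ :=
  VectorFourier.norm_fourierIntegral_le_integral_norm _ _ _ _ _

theorem fourier_comp_sub_right (f : V → E) (u ξ : V) :
    𝓕 (fun v ↦ f (v - u)) ξ = 𝐞 (-⟪ξ, u⟫) • 𝓕 f ξ := by
  have := congrFun (VectorFourier.fourierIntegral_comp_add_right 𝐞 volume (innerₗ V) f (-u)) ξ
  simp only [Function.comp_def, innerₗ_apply_apply, inner_neg_left, ← sub_eq_add_neg] at this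
  rwa [real_inner_comm ξ u] at this

theorem fourierInv_fourierChar_smul (f : V → E) (ζ η : V) :
    𝓕⁻ (fun v ↦ 𝐞 (-⟪v, ζ⟫) • f v) η = 𝓕 f (ζ - η) := by
  rw [fourierInv_eq, fourier_eq]
  congr 1 with v
  rw [smul_smul, ← AddChar.map_add_eq_mul, inner_sub_right]
  ring_nf

theorem integral_fourier_mul_eq {f g : V → ℂ} (hf : Integrable f) (hg : Integrable g) :
    ∫ ξ, 𝓕 f ξ * g ξ = ∫ x, f x * 𝓕 g x := by
  simpa using! VectorFourier.integral_fourierIntegral_smul_eq_flip (L := innerₗ V)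
    continuous_fourierChar continuous_inner hf hg

theorem integral_fourierInv_mul_eq {f g : V → ℂ} (hf : Integrable f) (hg : Integrable g) :
    ∫ ξ, 𝓕⁻ f ξ * g ξ = ∫ x, f x * 𝓕⁻ g x := by
  have hflip : (-innerₗ V).flip = -innerₗ V := by ext; simp [real_inner_comm]
  simpa [hflip] using! VectorFourier.integral_fourierIntegral_smul_eq_flip (L := -innerₗ V)
    continuous_fourierChar (by simpa using continuous_inner.fun_neg) hf hg

theorem fourier_mul_eq_integral_fourier_sub_mul {f g : V → ℂ} (hf : Integrable f)
    (hg_cont : Continuous g) (hg : Integrable g) (hg' : Integrable (𝓕 g)) (ζ : V) :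
    𝓕 (fun v ↦ f v * g v) ζ = ∫ η, 𝓕 f (ζ - η) * 𝓕 g η :=
  calc 𝓕 (fun v ↦ f v * g v) ζ = ∫ v, (𝐞 (-⟪v, ζ⟫) • f v) * 𝓕⁻ (𝓕 g) v := by
        rw [hg_cont.fourierInv_fourier_eq hg hg', fourier_eq]
        simp_rw [smul_mul_assoc]
    _ = ∫ η, 𝓕⁻ (fun v ↦ 𝐞 (-⟪v, ζ⟫) • f v) η * 𝓕 g η :=
        (integral_fourierInv_mul_eq ((fourierIntegral_convergent_iff ζ).2 hf) hg').symm
    _ = ∫ η, 𝓕 f (ζ - η) * 𝓕 g η := by simp_rw [fourierInv_fourierChar_smul]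

theorem fourier_mul_comp_sub_right {f : V → ℂ} (hf_cont : Continuous f) (hf : Integrable f)
    (hf' : Integrable (𝓕 f)) (u ζ : V) :
    𝓕 (fun v ↦ f v * f (v - u)) ζ = 𝓕 (fun η ↦ 𝓕 f (ζ - η) * 𝓕 f η) u := by
  have hshift : 𝓕 (fun v ↦ f (v - u)) = fun η ↦ 𝐞 (-⟪η, u⟫) • 𝓕 f η :=
    funext (fourier_comp_sub_right f u)
  have hshift' : Integrable (𝓕 (fun v ↦ f (v - u))) := by
    rw [hshift]
    exact (fourierIntegral_convergent_iff u).2 hf'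
  rw [fourier_mul_eq_integral_fourier_sub_mul hf (by fun_prop) (hf.comp_sub_right u) hshift',
    hshift, fourier_eq]
  simp_rw [mul_smul_comm]

theorem integral_mul_fourier_mul_comp_sub_right {f G : V → ℂ} (hf_cont : Continuous f)
    (hf : Integrable f) (hf' : Integrable (𝓕 f)) (hG : Integrable G) (ζ : V) :
    ∫ u, G u * 𝓕 (fun v ↦ f v * f (v - u)) ζ = ∫ η, 𝓕 G η * (𝓕 f (ζ - η) * 𝓕 f η) := by
  have hk : Integrable (fun η ↦ 𝓕 f (ζ - η) * 𝓕 f η) :=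
    hf'.bdd_mul (hf'.comp_sub_left ζ).aestronglyMeasurable
      (ae_of_all _ fun η ↦ norm_fourier_le_integral_norm f (ζ - η))
  simp_rw [fourier_mul_comp_sub_right hf_cont hf hf']
  exact (integral_fourier_mul_eq hG hk).symm

theorem integral_mul_cexp_neg_inner_eq_fourier (h : V → ℂ) (ξ : V) :
    ∫ v, h v * Complex.exp (-Complex.I * ⟪ξ, v⟫) = 𝓕 h ((2 * π)⁻¹ • ξ) := by
  rw [fourier_eq']
  congr 1 with v
  rw [smul_eq_mul, mul_comm, real_inner_smul_right, real_inner_comm]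
  congr 2
  field_simp
  push_cast
  ring

end Real

theorem weighted_convolution_form_of_transformed_collision_general
    (d : ℕ)
    (f : SchwartzMap (EuclideanSpace ℝ (Fin d)) ℂ)
    (ζ : EuclideanSpace ℝ (Fin d))
    (G : EuclideanSpace ℝ (Fin d) → ℂ) (hG : Integrable G)
    (fhat Ghat : EuclideanSpace ℝ (Fin d) → ℂ)
    (hfhat : ∀ ξ : EuclideanSpace ℝ (Fin d),
      fhat ξ = (((2 * Real.pi) ^ (-(d : ℝ) / 2) : ℝ) : ℂ) *
        ∫ v : EuclideanSpace ℝ (Fin d), f v * Complex.exp (-Complex.I * ((⟪ξ, v⟫ : ℝ) : ℂ)))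
    (hGhat : ∀ ξ : EuclideanSpace ℝ (Fin d),
      Ghat ξ = (((2 * Real.pi) ^ (-(d : ℝ) / 2) : ℝ) : ℂ) *
        ∫ u : EuclideanSpace ℝ (Fin d), G u * Complex.exp (-Complex.I * ((⟪ξ, u⟫ : ℝ) : ℂ))) :
    (∫ u : EuclideanSpace ℝ (Fin d),
        G u * ((((2 * Real.pi) ^ (-(d : ℝ) / 2) : ℝ) : ℂ) *
          ∫ v : EuclideanSpace ℝ (Fin d),
            f v * f (v - u) * Complex.exp (-Complex.I * ((⟪ζ, v⟫ : ℝ) : ℂ)))) =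
      ∫ ξ : EuclideanSpace ℝ (Fin d), Ghat ξ * fhat (ζ - ξ) * fhat ξ := by
  set c : ℝ := (2 * π) ^ (-(d : ℝ) / 2)
  have hfhat' (ξ) : fhat ξ = c * 𝓕 ⇑f ((2 * π)⁻¹ • ξ) := by
    rw [hfhat, integral_mul_cexp_neg_inner_eq_fourier]
  have hGhat' (ξ) : Ghat ξ = c * 𝓕 G ((2 * π)⁻¹ • ξ) := by
    rw [hGhat, integral_mul_cexp_neg_inner_eq_fourier]
  calc _ = c * ∫ u, G u * 𝓕 (fun v ↦ f v * f (v - u)) ((2 * π)⁻¹ • ζ) := by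
        simp_rw [integral_mul_cexp_neg_inner_eq_fourier, mul_left_comm (G _)]
        exact integral_const_mul _ _
    _ = c * ∫ η, 𝓕 G η * (𝓕 ⇑f ((2 * π)⁻¹ • ζ - η) * 𝓕 ⇑f η) := by
        rw [integral_mul_fourier_mul_comp_sub_right f.continuous f.integrable (𝓕 f).integrable hG]
    _ = ((2 * π) ^ d * c ^ 3 : ℝ) * ∫ η, 𝓕 G η * (𝓕 ⇑f ((2 * π)⁻¹ • ζ - η) * 𝓕 ⇑f η) := by
        rw [mul_comm _ (c ^ 3), rpow_neg_div_two_pow_three_mul_pow two_pi_pos]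
    _ = ∫ ξ, (c : ℂ) ^ 3 * (𝓕 G ((2 * π)⁻¹ • ξ) *
          (𝓕 ⇑f ((2 * π)⁻¹ • ζ - (2 * π)⁻¹ • ξ) * 𝓕 ⇑f ((2 * π)⁻¹ • ξ))) := by
        rw [Measure.integral_comp_inv_smul_of_nonneg volume
          (fun η ↦ (c : ℂ) ^ 3 * (𝓕 G η * (𝓕 ⇑f ((2 * π)⁻¹ • ζ - η) * 𝓕 ⇑f η))) two_pi_pos.le,
          finrank_euclideanSpace_fin, integral_const_mul, Complex.real_smul]
        push_cast
        ring
    _ = _ := by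
        congr 1 with ξ
        simp only [hfhat', hGhat', smul_sub]
        ring

/-- The weighted integral of the Fourier transform of `v ↦ f(v) f(v − u)` against `G(·,ζ)`
equals the weighted convolution of `f̂` with itself against the weight `Ĝ`:
`∫ G(u,ζ) F[f(v)f(v−u)](ζ) du = ∫ Ĝ(ξ,ζ) f̂(ζ−ξ) f̂(ξ) dξ`. -/
theorem weighted_convolution_form_of_transformed_collision
    (d : ℕ) (hd : 1 ≤ d)
    (f : SchwartzMap (EuclideanSpace ℝ (Fin d)) ℂ)
    (ζ : EuclideanSpace ℝ (Fin d))
    (G : EuclideanSpace ℝ (Fin d) → ℂ) (hG : Integrable G)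
    (fhat Ghat : EuclideanSpace ℝ (Fin d) → ℂ)
    (hfhat : ∀ ξ : EuclideanSpace ℝ (Fin d),
      fhat ξ = (((2 * Real.pi) ^ (-(d : ℝ) / 2) : ℝ) : ℂ) *
        ∫ v : EuclideanSpace ℝ (Fin d), f v * Complex.exp (-Complex.I * ((⟪ξ, v⟫ : ℝ) : ℂ)))
    (hGhat : ∀ ξ : EuclideanSpace ℝ (Fin d),
      Ghat ξ = (((2 * Real.pi) ^ (-(d : ℝ) / 2) : ℝ) : ℂ) *
        ∫ u : EuclideanSpace ℝ (Fin d), G u * Complex.exp (-Complex.I * ((⟪ξ, u⟫ : ℝ) : ℂ))) :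
    (∫ u : EuclideanSpace ℝ (Fin d),
        G u * ((((2 * Real.pi) ^ (-(d : ℝ) / 2) : ℝ) : ℂ) *
          ∫ v : EuclideanSpace ℝ (Fin d),
            f v * f (v - u) * Complex.exp (-Complex.I * ((⟪ζ, v⟫ : ℝ) : ℂ)))) =
      ∫ ξ : EuclideanSpace ℝ (Fin d), Ghat ξ * fhat (ζ - ξ) * fhat ξ :=
  weighted_convolution_form_of_transformed_collision_general d f ζ G hG fhat Ghat hfhat hGhat
end

section
/- Let f : ℝ³ → ℂ be a Schwartz function, let b : [−1, 1] → ℝ be a bounded measurable function (the angular cross section), let −3 < λ ≤ 1, and let ζ ∈ ℝ³. With the collision rule v' = v + ½(|u|σ − u) for u = v − v∗ and σ ∈ S², and with cos θ = (u·σ)/|u|, one has (2π)^{−3/2} ∫_{ℝ³} ∫_{ℝ³} ∫_{S²} f(v) f(v∗) |v − v∗|^λ b(cos θ) ( e^{−i ζ·v'} − e^{−i ζ·v} ) dσ dv∗ dv = ∫_{ℝ³} G(u, ζ) · [ (2π)^{−3/2} ∫_{ℝ³} f(v) f(v − u) e^{−i ζ·v} dv ] du, where G(u, ζ) = |u|^λ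 ∫_{S²} b( (u·σ)/|u| ) ( e^{−i(1/2) |u| ζ·σ} e^{i(1/2) ζ·u} − 1 ) dσ. -/
/-!
Writing `u = v - v_*`, the post-collisional phase splits as
`e^{-iζ·v'} = e^{-iζ·v} e^{-i|u|ζ·σ/2} e^{iζ·u/2}`, so the σ-integral at fixed `(v, v_*)` is
`f(v) f(v_*) e^{-iζ·v} G(v - v_*, ζ)`. The substitution `v_* = v - u` and Fubini's theorem then
give the right-hand side. Fubini applies because `|G(u, ζ)| ≲ |u|^λ`: near `u = 0` this is
integrable since `λ > -3`, and for `|u| ≥ 1` the bound `|u|^λ ≤ |u| ≤ (1 + |v|)(1 + |v - u|)`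
(from `λ ≤ 1`) is absorbed by the decay of the Schwartz function `f`.
-/

open MeasureTheory Metric
open scoped RealInnerProductSpace SchwartzMap

theorem rpow_norm_le_indicator_closedBall_add {E : Type*} [SeminormedAddCommGroup E] {lam : ℝ}
    (hlam : lam ≤ 1) (u v : E) :
    ‖u‖ ^ lam ≤ (closedBall (0 : E) 1).indicator (‖·‖ ^ lam) u + (1 + ‖v‖) * (1 + ‖v - u‖) := by
  have hv := norm_nonneg v
  have hvu := norm_nonneg (v - u)
  by_cases hu : ‖u‖ ≤ 1
  · rw [Set.indicator_of_mem (mem_closedBall_zero_iff.2 hu)]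
    nlinarith
  · rw [Set.indicator_of_notMem (mt mem_closedBall_zero_iff.1 hu), zero_add]
    have htri : ‖u‖ ≤ ‖v‖ + ‖v - u‖ := by simpa using norm_sub_le v (v - u)
    calc ‖u‖ ^ lam ≤ ‖u‖ ^ (1 : ℝ) := Real.rpow_le_rpow_of_exponent_le (by linarith) hlam
      _ = ‖u‖ := Real.rpow_one _
      _ ≤ (1 + ‖v‖) * (1 + ‖v - u‖) := by nlinarith

theorem real_inner_div_norm_mem_Icc {E : Type*} [NormedAddCommGroup E] [InnerProductSpace ℝ E]
    (u : E) {σ : E} (hσ : ‖σ‖ = 1) : ⟪u, σ⟫ / ‖u‖ ∈ Set.Icc (-1 : ℝ) 1 := by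
  have := abs_real_inner_div_norm_mul_norm_le_one u σ
  rwa [hσ, mul_one, abs_le] at this

theorem norm_exp_neg_I_mul_ofReal (x : ℝ) : ‖Complex.exp (-Complex.I * x)‖ = 1 := by
  rw [neg_mul, ← mul_neg, ← Complex.ofReal_neg, Complex.norm_exp_I_mul_ofReal]

section HaarIntegrability

variable {E : Type*} [NormedAddCommGroup E] [NormedSpace ℝ E] [FiniteDimensional ℝ E]
  [MeasurableSpace E] [BorelSpace E] {μ : Measure E} [μ.IsAddHaarMeasure]

theorem integrable_prod_mul_comp_sub {g h : E → ℝ} (hg : Integrable g μ) (hh : Integrable h μ) :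
    Integrable (fun p : E × E => g p.1 * h (p.1 - p.2)) (μ.prod μ) := by
  simpa [Function.comp_def] using
    (hg.convolution_integrand (ContinuousLinearMap.mul ℝ ℝ) hh.comp_neg).swap

theorem integrable_indicator_closedBall_rpow_norm [Nontrivial E] {lam : ℝ}
    (hlam : -(Module.finrank ℝ E : ℝ) < lam) (r : ℝ) :
    Integrable ((closedBall (0 : E) r).indicator (‖·‖ ^ lam)) μ := by
  have hloc : LocallyIntegrable (fun x : E => ‖x‖ ^ lam) μ :=
    locallyIntegrable_of_norm_le_rpow (C := 1) (α := -lam) Module.finrank_pos (by linarith)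
      (.of_forall fun x => by simp [abs_of_nonneg (Real.rpow_nonneg (norm_nonneg x) _)])
      (Measurable.aestronglyMeasurable (by fun_prop))
  exact (hloc.integrableOn_isCompact (isCompact_closedBall 0 r)).integrable_indicator
    measurableSet_closedBall

namespace SchwartzMap

variable {F : Type*} [NormedAddCommGroup F] [NormedSpace ℝ F]

theorem integrable_one_add_norm_mul_norm (f : 𝓢(E, F)) :
    Integrable (fun x => (1 + ‖x‖) * ‖f x‖) μ := by
  refine (f.integrable.norm.add (f.integrable_pow_mul μ 1)).congr (.of_forall fun x => ?_)
  simp only [Pi.add_apply, pow_one]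
  ring

theorem integrable_prod_norm_mul_norm_sub_mul_rpow [Nontrivial E] (f g : 𝓢(E, F)) {lam : ℝ}
    (hlam₁ : -(Module.finrank ℝ E : ℝ) < lam) (hlam₂ : lam ≤ 1) :
    Integrable (fun p : E × E => ‖f p.1‖ * ‖g (p.1 - p.2)‖ * ‖p.2‖ ^ lam) (μ.prod μ) := by
  set S := SchwartzMap.seminorm ℝ 0 0 g
  set ρ := (closedBall (0 : E) 1).indicator (‖·‖ ^ lam)
  have hρ : ∀ u, 0 ≤ ρ u := Set.indicator_nonneg fun u _ => Real.rpow_nonneg (norm_nonneg u) _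
  have hbound : Integrable (fun p : E × E => S * ‖f p.1‖ * ρ p.2 +
      (1 + ‖p.1‖) * ‖f p.1‖ * ((1 + ‖p.1 - p.2‖) * ‖g (p.1 - p.2)‖)) (μ.prod μ) :=
    ((f.integrable.norm.const_mul S).mul_prod
      (integrable_indicator_closedBall_rpow_norm hlam₁ 1)).add
      (integrable_prod_mul_comp_sub f.integrable_one_add_norm_mul_norm
        g.integrable_one_add_norm_mul_norm)
  refine hbound.mono' (Measurable.aestronglyMeasurable (by fun_prop))
    (.of_forall fun ⟨v, u⟩ => ?_)
  have hgS : ‖g (v - u)‖ ≤ S := g.norm_le_seminorm ℝ (v - u)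
  have hweight := rpow_norm_le_indicator_closedBall_add hlam₂ u v
  rw [Real.norm_of_nonneg (by positivity)]
  calc ‖f v‖ * ‖g (v - u)‖ * ‖u‖ ^ lam
      ≤ ‖f v‖ * ‖g (v - u)‖ * (ρ u + (1 + ‖v‖) * (1 + ‖v - u‖)) := by gcongr
    _ ≤ _ := by
      have := mul_le_mul_of_nonneg_right (mul_le_mul_of_nonneg_left hgS (norm_nonneg (f v))) (hρ u)
      nlinarith

end SchwartzMap

end HaarIntegrability

section CollisionKernel

variable {E : Type*} [NormedAddCommGroup E] [InnerProductSpace ℝ E] [MeasurableSpace E]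

/-- The paper's `G(u, ζ)`, with the sphere carrying the measure `μ.toSphere` induced by `μ`. -/
noncomputable def collisionFourierKernel (μ : Measure E) (b : ℝ → ℝ) (lam : ℝ) (u ζ : E) : ℂ :=
  ((‖u‖ ^ lam : ℝ) : ℂ) *
    ∫ σ : sphere (0 : E) 1, ((b (⟪u, (σ : E)⟫ / ‖u‖) : ℝ) : ℂ) *
      (Complex.exp (-Complex.I * (((1 / 2) * ‖u‖ * ⟪ζ, (σ : E)⟫ : ℝ) : ℂ)) *
        Complex.exp (Complex.I * (((1 / 2) * ⟪ζ, u⟫ : ℝ) : ℂ)) - 1) ∂μ.toSphere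

variable (μ : Measure E) {b : ℝ → ℝ} (lam : ℝ) (ζ : E)

theorem norm_collisionFourierKernel_le {Cb : ℝ} (hb : ∀ x ∈ Set.Icc (-1 : ℝ) 1, |b x| ≤ Cb)
    [IsFiniteMeasure μ.toSphere] (u : E) :
    ‖collisionFourierKernel μ b lam u ζ‖ ≤ 2 * Cb * μ.toSphere.real Set.univ * ‖u‖ ^ lam := by
  have hnorm_rpow : ‖((‖u‖ ^ lam : ℝ) : ℂ)‖ = ‖u‖ ^ lam := by
    rw [Complex.norm_real, Real.norm_of_nonneg (by positivity)]
  rw [collisionFourierKernel, norm_mul, hnorm_rpow, mul_comm]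
  gcongr
  refine norm_integral_le_of_norm_le_const (.of_forall fun σ => ?_)
  have hbσ := hb _ (real_inner_div_norm_mem_Icc u (norm_eq_of_mem_sphere σ))
  have hphase : ‖Complex.exp (-Complex.I * (((1 / 2) * ‖u‖ * ⟪ζ, (σ : E)⟫ : ℝ) : ℂ)) *
      Complex.exp (Complex.I * (((1 / 2) * ⟪ζ, u⟫ : ℝ) : ℂ)) - 1‖ ≤ 2 := by
    refine (norm_sub_le _ _).trans ?_
    rw [norm_mul, norm_exp_neg_I_mul_ofReal, Complex.norm_exp_I_mul_ofReal]
    norm_num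
  rw [norm_mul, Complex.norm_real, Real.norm_eq_abs]
  exact (mul_le_mul hbσ hphase (norm_nonneg _) ((abs_nonneg _).trans hbσ)).trans_eq (mul_comm _ _)

theorem stronglyMeasurable_collisionFourierKernel [BorelSpace E] [SecondCountableTopology E]
    (hb : Measurable b) [SFinite μ.toSphere] :
    StronglyMeasurable fun u => collisionFourierKernel μ b lam u ζ := by
  have hintegrand : StronglyMeasurable fun p : E × sphere (0 : E) 1 =>
      ((b (⟪p.1, (p.2 : E)⟫ / ‖p.1‖) : ℝ) : ℂ) *
        (Complex.exp (-Complex.I * (((1 / 2) * ‖p.1‖ * ⟪ζ, (p.2 : E)⟫ : ℝ) : ℂ)) *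
          Complex.exp (Complex.I * (((1 / 2) * ⟪ζ, p.1⟫ : ℝ) : ℂ)) - 1) :=
    Measurable.stronglyMeasurable (by fun_prop)
  exact (Measurable.stronglyMeasurable (by fun_prop)).mul hintegrand.integral_prod_right'

theorem integral_sphere_collision_eq (c : ℂ) (u v : E) :
    ∫ σ : sphere (0 : E) 1, c * ((‖u‖ ^ lam : ℝ) : ℂ) * ((b (⟪u, (σ : E)⟫ / ‖u‖) : ℝ) : ℂ) *
        (Complex.exp (-Complex.I * ((⟪ζ, v + (1 / 2 : ℝ) • (‖u‖ • (σ : E) - u)⟫ : ℝ) : ℂ)) -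
          Complex.exp (-Complex.I * ((⟪ζ, v⟫ : ℝ) : ℂ))) ∂μ.toSphere =
      c * Complex.exp (-Complex.I * ((⟪ζ, v⟫ : ℝ) : ℂ)) * collisionFourierKernel μ b lam u ζ := by
  have hphase : ∀ σ : E,
      Complex.exp (-Complex.I * ((⟪ζ, v + (1 / 2 : ℝ) • (‖u‖ • σ - u)⟫ : ℝ) : ℂ)) =
        Complex.exp (-Complex.I * ((⟪ζ, v⟫ : ℝ) : ℂ)) *
          (Complex.exp (-Complex.I * (((1 / 2) * ‖u‖ * ⟪ζ, σ⟫ : ℝ) : ℂ)) *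
            Complex.exp (Complex.I * (((1 / 2) * ⟪ζ, u⟫ : ℝ) : ℂ))) := by
    intro σ
    rw [← Complex.exp_add, ← Complex.exp_add, inner_add_right, real_inner_smul_right,
      inner_sub_right, real_inner_smul_right]
    push_cast
    ring_nf
  simp_rw [hphase]
  rw [collisionFourierKernel, ← mul_assoc, ← integral_const_mul]
  congr 1 with σ
  ring

theorem integrable_collision_integrand [FiniteDimensional ℝ E] [BorelSpace E] [Nontrivial E]
    [μ.IsAddHaarMeasure] (f : 𝓢(E, ℂ)) (hb_meas : Measurable b) {Cb : ℝ}
    (hb : ∀ x ∈ Set.Icc (-1 : ℝ) 1, |b x| ≤ Cb)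
    (hlam₁ : -(Module.finrank ℝ E : ℝ) < lam) (hlam₂ : lam ≤ 1) :
    Integrable (fun p : E × E => f p.1 * f (p.1 - p.2) *
      Complex.exp (-Complex.I * ((⟪ζ, p.1⟫ : ℝ) : ℂ)) * collisionFourierKernel μ b lam p.2 ζ)
      (μ.prod μ) := by
  refine ((f.integrable_prod_norm_mul_norm_sub_mul_rpow f hlam₁ hlam₂).const_mul
    (2 * Cb * μ.toSphere.real Set.univ)).mono' ?_ (.of_forall fun p => ?_)
  · exact (Continuous.aestronglyMeasurable (by fun_prop)).mul
      ((stronglyMeasurable_collisionFourierKernel μ lam ζ hb_meas).comp_measurable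
        measurable_snd).aestronglyMeasurable
  · calc _ = ‖f p.1‖ * ‖f (p.1 - p.2)‖ * ‖collisionFourierKernel μ b lam p.2 ζ‖ := by
          rw [norm_mul, norm_mul, norm_mul, norm_exp_neg_I_mul_ofReal, mul_one]
      _ ≤ ‖f p.1‖ * ‖f (p.1 - p.2)‖ * (2 * Cb * μ.toSphere.real Set.univ * ‖p.2‖ ^ lam) := by
          gcongr
          exact norm_collisionFourierKernel_le μ lam ζ hb p.2
      _ = _ := by ring

end CollisionKernel

/-- The Fourier transform of the Boltzmann collision operator (the weak form tested
against `φ(v) = e^{−iζ·v}/(2π)^{3/2}`) equals the weighted integral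
`∫ G(u,ζ) F[f(v)f(v−u)](ζ) du`, where `G(u,ζ) = |u|^λ ∫_{S²} b(u·σ/|u|)
(e^{−i(1/2)|u| ζ·σ} e^{i(1/2) ζ·u} − 1) dσ`. -/
theorem fourier_transform_collision_operator
    (f : SchwartzMap (EuclideanSpace ℝ (Fin 3)) ℂ)
    (b : ℝ → ℝ) (hb_meas : Measurable b)
    (hb_bdd : ∃ Cb : ℝ, ∀ x ∈ Set.Icc (-1 : ℝ) 1, |b x| ≤ Cb)
    (lam : ℝ) (hlam₁ : -3 < lam) (hlam₂ : lam ≤ 1)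
    (ζ : EuclideanSpace ℝ (Fin 3))
    (G : EuclideanSpace ℝ (Fin 3) → EuclideanSpace ℝ (Fin 3) → ℂ)
    (hG : ∀ u ζ' : EuclideanSpace ℝ (Fin 3),
      G u ζ' = ((‖u‖ ^ lam : ℝ) : ℂ) *
        ∫ σ : sphere (0 : EuclideanSpace ℝ (Fin 3)) 1,
          ((b (⟪u, (σ : EuclideanSpace ℝ (Fin 3))⟫ / ‖u‖) : ℝ) : ℂ) *
            (Complex.exp (-Complex.I *
                (((1 / 2) * ‖u‖ * ⟪ζ', (σ : EuclideanSpace ℝ (Fin 3))⟫ : ℝ) : ℂ)) *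
              Complex.exp (Complex.I * (((1 / 2) * ⟪ζ', u⟫ : ℝ) : ℂ)) - 1)
          ∂((volume : Measure (EuclideanSpace ℝ (Fin 3))).toSphere)) :
    (((2 * Real.pi) ^ (-(3 : ℝ) / 2) : ℝ) : ℂ) *
        (∫ v : EuclideanSpace ℝ (Fin 3), ∫ v_ast : EuclideanSpace ℝ (Fin 3),
          ∫ σ : sphere (0 : EuclideanSpace ℝ (Fin 3)) 1,
            f v * f v_ast * ((‖v - v_ast‖ ^ lam : ℝ) : ℂ) *
              ((b (⟪v - v_ast, (σ : EuclideanSpace ℝ (Fin 3))⟫ / ‖v - v_ast‖) : ℝ) : ℂ) *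
              (Complex.exp (-Complex.I *
                  ((⟪ζ, v + (1 / 2 : ℝ) •
                      (‖v - v_ast‖ • (σ : EuclideanSpace ℝ (Fin 3)) - (v - v_ast))⟫ : ℝ) : ℂ)) -
                Complex.exp (-Complex.I * ((⟪ζ, v⟫ : ℝ) : ℂ)))
            ∂((volume : Measure (EuclideanSpace ℝ (Fin 3))).toSphere)) =
      ∫ u : EuclideanSpace ℝ (Fin 3),
        G u ζ * ((((2 * Real.pi) ^ (-(3 : ℝ) / 2) : ℝ) : ℂ) *
          ∫ v : EuclideanSpace ℝ (Fin 3),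
            f v * f (v - u) * Complex.exp (-Complex.I * ((⟪ζ, v⟫ : ℝ) : ℂ))) := by
  obtain ⟨Cb, hb⟩ := hb_bdd
  obtain rfl : G = collisionFourierKernel volume b lam := funext fun u => funext (hG u)
  simp only [integral_sphere_collision_eq (volume : Measure (EuclideanSpace ℝ (Fin 3)))]
  have hsubst : ∀ v, ∫ v_ast, f v * f v_ast * Complex.exp (-Complex.I * ((⟪ζ, v⟫ : ℝ) : ℂ)) *
      collisionFourierKernel volume b lam (v - v_ast) ζ = ∫ u, f v * f (v - u) *
        Complex.exp (-Complex.I * ((⟪ζ, v⟫ : ℝ) : ℂ)) * collisionFourierKernel volume b lam u ζ :=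
    fun v => by simpa only [sub_sub_cancel] using integral_sub_left_eq_self (fun u => f v *
      f (v - u) * Complex.exp (-Complex.I * ((⟪ζ, v⟫ : ℝ) : ℂ)) *
        collisionFourierKernel volume b lam u ζ) volume v
  have hintegrable := integrable_collision_integrand volume lam ζ f hb_meas hb
    (by simpa using hlam₁) hlam₂
  rw [integral_congr_ae (.of_forall hsubst), integral_integral_swap hintegrable,
    ← integral_const_mul]
  congr 1 with u
  rw [integral_mul_const]
  ring
end
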